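/- Let u : R^{2n} → R be C^3 with bounded first derivatives along the vector fields X^ε_{i,u}, and suppose u solves L_ε u = Σ_{i=1}^{2n} X^ε_{i,u}( X^ε_{i,u}u / √(1 + |∇^ε_u u|²) ) = 0 in an open set Ω. Then ω = ∂_{2n}u satisfies the linear equation Σ_{i,j} (X^ε_{i,u})^* ( (a_{ij}(∇^ε_u u)/√(1+|∇^ε_u u|²)) (X^ε_{j,u})^* ω ) = 0 in Ω, where a_{ij}(p) = δ_{ij} - p_i p_j/(1+|p|²). -/

import Mathlib

/-!
Differentiate `L_ε u = Σ_i X_i v_i`, `v_i = X_i u / √(1 + |∇u|²)`, in the direction `∂_{2n}`.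
Every field has the form `X_i = ∂_i + c_i ∂_{2n}` with `∂_{2n} c_i = δ_{i,2n-1} ∂_{2n} u`, so
`∂_{2n} (X_i f) = X_i (∂_{2n} f) + δ_{i,2n-1} (∂_{2n} u) ∂_{2n} f = -(X_i)^* (∂_{2n} f)`.
Applied to `f = u` this gives `∂_{2n} (X_j u) = -(X_j)^* ω`; since the differential of
`p ↦ p / √(1 + |p|²)` is `a(p) / √(1 + |p|²)`, it follows that
`∂_{2n} v_i = -Σ_j a_{ij} / √(1 + |∇u|²) (X_j)^* ω`. Applied to `f = v_i` it gives
`0 = ∂_{2n} (L_ε u) = -Σ_i (X_i)^* (∂_{2n} v_i)`, which is the claim.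
-/

open scoped BigOperators

/-- Partial derivative `∂_i f (x)` on `ℝ^N`. -/
noncomputable def pd {N : ℕ} (i : Fin N) (f : EuclideanSpace ℝ (Fin N) → ℝ)
    (x : EuclideanSpace ℝ (Fin N)) : ℝ :=
  fderiv ℝ f x (EuclideanSpace.single i 1)

/-- The vector fields `X^ε_{i,u}` of the Riemannian approximation on the
intrinsic-graph domain `ℝ^{2n}` (0-based indices: `X_i = ∂_i` for `i < n-1`,
`X_i = ∂_i - x_{i-(n-1)}∂_{2n}` for `n-1 ≤ i < 2n-2`,
`X_{2n-2} = ∂_{2n-2} + u∂_{2n}`, `X_{2n-1} = ε∂_{2n}`). -/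
noncomputable def Xop (n : ℕ) (hn : 1 ≤ n) (ε : ℝ)
    (u : EuclideanSpace ℝ (Fin (2*n)) → ℝ) (i : Fin (2*n))
    (f : EuclideanSpace ℝ (Fin (2*n)) → ℝ) (x : EuclideanSpace ℝ (Fin (2*n))) : ℝ :=
  if (i : ℕ) < n - 1 then pd i f x
  else if (i : ℕ) < 2*n - 2 then
    pd i f x - x ⟨(i : ℕ) - (n - 1), by have := i.isLt; omega⟩ * pd ⟨2*n - 1, by omega⟩ f x
  else if (i : ℕ) = 2*n - 2 then
    pd i f x + u x * pd ⟨2*n - 1, by omega⟩ f x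
  else ε * pd ⟨2*n - 1, by omega⟩ f x

/-- The squared length `|∇^ε_u f|²` of the intrinsic gradient. -/
noncomputable def gradSq (n : ℕ) (hn : 1 ≤ n) (ε : ℝ)
    (u f : EuclideanSpace ℝ (Fin (2*n)) → ℝ) (x : EuclideanSpace ℝ (Fin (2*n))) : ℝ :=
  ∑ i : Fin (2*n), (Xop n hn ε u i f x) ^ 2

/-- `a_{ij}(p) = δ_{ij} - p_i p_j/(1+|p|²)` for `p : Fin m → ℝ`. -/
noncomputable def aCoef {m : ℕ} (p : Fin m → ℝ) (i j : Fin m) : ℝ :=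
  (if i = j then 1 else 0) - p i * p j / (1 + ∑ k, (p k) ^ 2)

/-- The approximating minimal surface operator
`L_ε u = Σ_i X^ε_{i,u}( X^ε_{i,u}u / √(1+|∇^ε_u u|²) )`. -/
noncomputable def Lop (n : ℕ) (hn : 1 ≤ n) (ε : ℝ)
    (u : EuclideanSpace ℝ (Fin (2*n)) → ℝ) (x : EuclideanSpace ℝ (Fin (2*n))) : ℝ :=
  ∑ i : Fin (2*n),
    Xop n hn ε u i
      (fun y => Xop n hn ε u i u y / Real.sqrt (1 + gradSq n hn ε u u y)) x

/-- The formal adjoint `(X^ε_{i,u})^* = -X^ε_{i,u} - δ_{i,2n-1}(∂_{2n}u)`. -/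
noncomputable def XopStar (n : ℕ) (hn : 1 ≤ n) (ε : ℝ)
    (u : EuclideanSpace ℝ (Fin (2*n)) → ℝ) (i : Fin (2*n))
    (f : EuclideanSpace ℝ (Fin (2*n)) → ℝ) (x : EuclideanSpace ℝ (Fin (2*n))) : ℝ :=
  -(Xop n hn ε u i f x)
    - (if (i : ℕ) = 2*n - 2 then pd ⟨2*n - 1, by omega⟩ u x * f x else 0)

open Topology

theorem sum_aCoef_mul {m : ℕ} (p q : Fin m → ℝ) (i : Fin m) :
    ∑ j, aCoef p i j * q j = q i - p i * (∑ j, p j * q j) / (1 + ∑ k, p k ^ 2) := by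
  simp only [aCoef, sub_mul, Finset.sum_sub_distrib, ite_mul, one_mul, zero_mul,
    Finset.sum_ite_eq, Finset.mem_univ, if_true, Finset.mul_sum, Finset.sum_div]
  congr 1
  exact Finset.sum_congr rfl fun j _ => by ring

section Normalization

variable {E : Type*} [NormedAddCommGroup E] [NormedSpace ℝ E] {m : ℕ} {p : Fin m → E → ℝ}

theorem hasFDerivAt_div_sqrt_one_add_sum_sq {p' : Fin m → StrongDual ℝ E} {x : E}
    (hp : ∀ k, HasFDerivAt (p k) (p' k) x) (i : Fin m) :
    HasFDerivAt (fun y => p i y / √(1 + ∑ k, p k y ^ 2))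
      (∑ j, (aCoef (fun k => p k x) i j / √(1 + ∑ k, p k x ^ 2)) • p' j) x := by
  have hW : 0 < 1 + ∑ k, p k x ^ 2 := by positivity
  have hs := ((HasFDerivAt.fun_sum fun k _ => (hp k).pow 2).const_add 1).sqrt hW.ne'
  have hinv := (hasDerivAt_inv (Real.sqrt_pos.2 hW).ne').comp_hasFDerivAt x hs
  have h := (hp i).fun_mul hinv
  simp only [Function.comp_def, ← div_eq_mul_inv] at h
  refine h.congr_fderiv ?_
  ext v
  have hspos := Real.sqrt_pos.2 hW
  simp only [sum_apply, smul_apply, smul_eq_mul, add_apply, ← Finset.sum_div,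
    ← mul_div_right_comm, nsmul_eq_mul, Nat.cast_ofNat, Nat.add_one_sub_one, pow_one, mul_assoc,
    ← Finset.mul_sum]
  rw [sum_aCoef_mul, Real.sq_sqrt hW.le]
  field_simp
  ring

theorem ContDiff.aCoef {k : WithTop ℕ∞} (hp : ∀ l, ContDiff ℝ k (p l)) (i j : Fin m) :
    ContDiff ℝ k (fun y => aCoef (fun l => p l y) i j) :=
  contDiff_const.sub (((hp i).mul (hp j)).div
    (contDiff_const.add (ContDiff.sum fun l _ => (hp l).pow 2)) fun _ => by positivity)

end Normalization

section PartialDerivative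

variable {N : ℕ} {i j : Fin N} {f g : EuclideanSpace ℝ (Fin N) → ℝ}
  {x : EuclideanSpace ℝ (Fin N)}

theorem pd_add (hf : DifferentiableAt ℝ f x) (hg : DifferentiableAt ℝ g x) :
    pd i (fun y => f y + g y) x = pd i f x + pd i g x := by
  simp [pd, fderiv_fun_add hf hg]

theorem pd_mul (hf : DifferentiableAt ℝ f x) (hg : DifferentiableAt ℝ g x) :
    pd i (fun y => f y * g y) x = f x * pd i g x + g x * pd i f x := by
  simp [pd, fderiv_fun_mul hf hg]

theorem pd_neg : pd i (fun y => -f y) x = -pd i f x := by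
  simp [pd]

theorem pd_const (c : ℝ) : pd i (fun _ => c) x = 0 := by
  simp [pd]

theorem pd_sum {ι : Type*} {s : Finset ι} {A : ι → EuclideanSpace ℝ (Fin N) → ℝ}
    (h : ∀ j ∈ s, DifferentiableAt ℝ (A j) x) :
    pd i (fun y => ∑ j ∈ s, A j y) x = ∑ j ∈ s, pd i (A j) x := by
  simp [pd, fderiv_fun_sum h]

theorem pd_coord (k : Fin N) : pd i (fun y => y k) x = if k = i then 1 else 0 := by
  rw [pd, show (fun y : EuclideanSpace ℝ (Fin N) => y k) = EuclideanSpace.proj (𝕜 := ℝ) k from rfl,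
    ContinuousLinearMap.fderiv]
  simp [PiLp.single_apply]

theorem pd_congr_nhds (h : f =ᶠ[𝓝 x] g) : pd i f x = pd i g x := by
  rw [pd, pd, h.fderiv_eq]

theorem contDiff_pd {k : ℕ} (hf : ContDiff ℝ (k + 1) f) : ContDiff ℝ k (pd j f) :=
  (hf.fderiv_right le_rfl).clm_apply contDiff_const

theorem pd_comm (hf : ContDiffAt ℝ 2 f x) : pd i (pd j f) x = pd j (pd i f) x := by
  have hdf : DifferentiableAt ℝ (fderiv ℝ f) x :=
    (hf.fderiv_right (m := 1) le_rfl).differentiableAt one_ne_zero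
  have hsecond : ∀ a b : Fin N, pd a (pd b f) x
      = fderiv ℝ (fderiv ℝ f) x (EuclideanSpace.single a 1) (EuclideanSpace.single b 1) := by
    intro a b
    rw [pd, show pd b f = fun y => fderiv ℝ f y (EuclideanSpace.single b 1) from rfl,
      fderiv_clm_apply hdf (differentiableAt_const _)]
    simp
  rw [hsecond, hsecond, hf.isSymmSndFDerivAt (by norm_num)]

end PartialDerivative

section VectorFields

variable {n : ℕ} (hn : 1 ≤ n) (ε : ℝ) {u : EuclideanSpace ℝ (Fin (2*n)) → ℝ}

/-- The coordinate `x_{2n}`, index `2n - 1` in the 0-based numbering of `Fin (2*n)`. -/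
def lastIdx : Fin (2*n) := ⟨2*n - 1, by omega⟩

/-- `X_i = ∂_i + Xcoef i · ∂_{2n}`; for the last field `∂_i = ∂_{2n}`, whence `ε - 1`. -/
noncomputable def Xcoef (u : EuclideanSpace ℝ (Fin (2*n)) → ℝ) (i : Fin (2*n)) :
    EuclideanSpace ℝ (Fin (2*n)) → ℝ :=
  if (i : ℕ) < n - 1 then fun _ => 0
  else if (i : ℕ) < 2*n - 2 then fun x => -x ⟨(i : ℕ) - (n - 1), by have := i.isLt; omega⟩
  else if (i : ℕ) = 2*n - 2 then u
  else fun _ => ε - 1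

theorem Xop_eq (u f : EuclideanSpace ℝ (Fin (2*n)) → ℝ) (i : Fin (2*n))
    (x : EuclideanSpace ℝ (Fin (2*n))) :
    Xop n hn ε u i f x = pd i f x + Xcoef ε u i x * pd (lastIdx hn) f x := by
  have hlt := i.isLt
  unfold Xop Xcoef lastIdx
  split_ifs
  · ring
  · ring
  · ring
  · rw [show i = ⟨2*n - 1, by omega⟩ from Fin.ext (by simp only; omega)]
    ring

theorem contDiff_Xcoef {k : WithTop ℕ∞} (hu : ContDiff ℝ k u) (i : Fin (2*n)) :
    ContDiff ℝ k (Xcoef ε u i) := by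
  unfold Xcoef
  split_ifs
  · exact contDiff_const
  · exact (EuclideanSpace.proj (𝕜 := ℝ) (ι := Fin (2*n)) _).contDiff.neg
  · exact hu
  · exact contDiff_const

theorem pd_last_Xcoef (u : EuclideanSpace ℝ (Fin (2*n)) → ℝ) (i : Fin (2*n))
    (x : EuclideanSpace ℝ (Fin (2*n))) :
    pd (lastIdx hn) (Xcoef ε u i) x
      = if (i : ℕ) = 2*n - 2 then pd (lastIdx hn) u x else 0 := by
  have hlt := i.isLt
  unfold Xcoef
  split_ifs <;> first | omega | skip
  · exact pd_const 0
  · rw [pd_neg, pd_coord, if_neg (by simp only [lastIdx, Fin.ext_iff]; omega), neg_zero]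
  · rfl
  · exact pd_const _

theorem XopStar_eq (u f : EuclideanSpace ℝ (Fin (2*n)) → ℝ) (i : Fin (2*n))
    (x : EuclideanSpace ℝ (Fin (2*n))) :
    XopStar n hn ε u i f x
      = -Xop n hn ε u i f x - if (i : ℕ) = 2*n - 2 then pd (lastIdx hn) u x * f x else 0 :=
  rfl

theorem pd_last_Xop (hu : ContDiff ℝ 1 u) {f : EuclideanSpace ℝ (Fin (2*n)) → ℝ}
    (hf : ContDiff ℝ 2 f) (i : Fin (2*n)) (x : EuclideanSpace ℝ (Fin (2*n))) :
    pd (lastIdx hn) (Xop n hn ε u i f) x = -XopStar n hn ε u i (pd (lastIdx hn) f) x := by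
  have hdpd : ∀ j, DifferentiableAt ℝ (pd j f) x := fun j =>
    ((contDiff_pd (k := 1) hf).differentiable one_ne_zero).differentiableAt
  have hdc : DifferentiableAt ℝ (Xcoef ε u i) x :=
    ((contDiff_Xcoef ε hu i).differentiable one_ne_zero).differentiableAt
  rw [show Xop n hn ε u i f = fun y => pd i f y + Xcoef ε u i y * pd (lastIdx hn) f y from
      funext (Xop_eq hn ε u f i), pd_add (hdpd i) (hdc.fun_mul (hdpd _)), pd_mul hdc (hdpd _),
    pd_comm hf.contDiffAt, pd_last_Xcoef, XopStar_eq, Xop_eq]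
  split_ifs <;> ring

theorem Xop_sum {ι : Type*} (s : Finset ι) {A : ι → EuclideanSpace ℝ (Fin (2*n)) → ℝ}
    {x : EuclideanSpace ℝ (Fin (2*n))} (h : ∀ j ∈ s, DifferentiableAt ℝ (A j) x)
    (i : Fin (2*n)) :
    Xop n hn ε u i (fun y => ∑ j ∈ s, A j y) x = ∑ j ∈ s, Xop n hn ε u i (A j) x := by
  simp only [Xop_eq, pd_sum h, Finset.mul_sum, Finset.sum_add_distrib]

theorem XopStar_sum {ι : Type*} (s : Finset ι) {A : ι → EuclideanSpace ℝ (Fin (2*n)) → ℝ}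
    {x : EuclideanSpace ℝ (Fin (2*n))} (h : ∀ j ∈ s, DifferentiableAt ℝ (A j) x)
    (i : Fin (2*n)) :
    XopStar n hn ε u i (fun y => ∑ j ∈ s, A j y) x = ∑ j ∈ s, XopStar n hn ε u i (A j) x := by
  simp only [XopStar_eq, Xop_sum hn ε s h, Finset.sum_sub_distrib, Finset.sum_neg_distrib]
  split_ifs
  · rw [Finset.mul_sum]
  · simp

theorem XopStar_neg (u g : EuclideanSpace ℝ (Fin (2*n)) → ℝ) (i : Fin (2*n))
    (x : EuclideanSpace ℝ (Fin (2*n))) :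
    XopStar n hn ε u i (fun y => -g y) x = -XopStar n hn ε u i g x := by
  simp only [XopStar_eq, Xop_eq, pd_neg]
  split_ifs <;> ring

theorem contDiff_Xop {k : ℕ} (hu : ContDiff ℝ k u) {f : EuclideanSpace ℝ (Fin (2*n)) → ℝ}
    (hf : ContDiff ℝ (k + 1) f) (i : Fin (2*n)) : ContDiff ℝ k (Xop n hn ε u i f) := by
  rw [show Xop n hn ε u i f = fun y => pd i f y + Xcoef ε u i y * pd (lastIdx hn) f y from
    funext (Xop_eq hn ε u f i)]
  exact (contDiff_pd hf).add ((contDiff_Xcoef ε hu i).mul (contDiff_pd hf))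

theorem contDiff_XopStar {k : ℕ} (hu : ContDiff ℝ (k + 1) u)
    {f : EuclideanSpace ℝ (Fin (2*n)) → ℝ} (hf : ContDiff ℝ (k + 1) f) (i : Fin (2*n)) :
    ContDiff ℝ k (XopStar n hn ε u i f) := by
  rw [show XopStar n hn ε u i f = fun y => -Xop n hn ε u i f y
      - if (i : ℕ) = 2*n - 2 then pd (lastIdx hn) u y * f y else 0 from
    funext (XopStar_eq hn ε u f i)]
  refine (contDiff_Xop hn ε (hu.of_le (by norm_num)) hf i).neg.sub ?_
  split_ifs
  · exact (contDiff_pd hu).mul (hf.of_le (by norm_num))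
  · exact contDiff_const

theorem one_add_gradSq_pos (u : EuclideanSpace ℝ (Fin (2*n)) → ℝ)
    (y : EuclideanSpace ℝ (Fin (2*n))) : 0 < 1 + gradSq n hn ε u u y := by
  unfold gradSq
  positivity

theorem contDiff_sqrt_one_add_gradSq {k : ℕ} (hu : ContDiff ℝ (k + 1) u) :
    ContDiff ℝ k (fun y => √(1 + gradSq n hn ε u u y)) :=
  (contDiff_const.add (ContDiff.sum fun l _ =>
    (contDiff_Xop hn ε (hu.of_le (by norm_num)) hu l).pow 2)).sqrt
    fun y => (one_add_gradSq_pos hn ε u y).ne'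

noncomputable def flux (u : EuclideanSpace ℝ (Fin (2*n)) → ℝ) (i : Fin (2*n))
    (y : EuclideanSpace ℝ (Fin (2*n))) : ℝ :=
  Xop n hn ε u i u y / √(1 + gradSq n hn ε u u y)

theorem contDiff_flux {k : ℕ} (hu : ContDiff ℝ (k + 1) u) (i : Fin (2*n)) :
    ContDiff ℝ k (flux hn ε u i) :=
  (contDiff_Xop hn ε (hu.of_le (by norm_num)) hu i).div (contDiff_sqrt_one_add_gradSq hn ε hu)
    fun y => (Real.sqrt_pos.2 (one_add_gradSq_pos hn ε u y)).ne'

theorem contDiff_aCoef_div_sqrt_mul_XopStar {k : ℕ} (hu : ContDiff ℝ (k + 1) u)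
    {f : EuclideanSpace ℝ (Fin (2*n)) → ℝ} (hf : ContDiff ℝ (k + 1) f) (i j : Fin (2*n)) :
    ContDiff ℝ k (fun y => aCoef (fun l => Xop n hn ε u l u y) i j / √(1 + gradSq n hn ε u u y)
      * XopStar n hn ε u j f y) :=
  ((ContDiff.aCoef (fun l => contDiff_Xop hn ε (hu.of_le (by norm_num)) hu l) i j).div
    (contDiff_sqrt_one_add_gradSq hn ε hu)
    fun y => (Real.sqrt_pos.2 (one_add_gradSq_pos hn ε u y)).ne').mul
    (contDiff_XopStar hn ε hu hf j)

theorem pd_last_flux (hu : ContDiff ℝ 3 u) (i : Fin (2*n)) (y : EuclideanSpace ℝ (Fin (2*n))) :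
    pd (lastIdx hn) (flux hn ε u i) y
      = -∑ j, aCoef (fun k => Xop n hn ε u k u y) i j / √(1 + gradSq n hn ε u u y)
          * XopStar n hn ε u j (pd (lastIdx hn) u) y := by
  have hX : ∀ k, DifferentiableAt ℝ (Xop n hn ε u k u) y := fun k =>
    ((contDiff_Xop (k := 2) hn ε (hu.of_le (by norm_num)) hu k).differentiable
      (by norm_num)).differentiableAt
  have hderiv := hasFDerivAt_div_sqrt_one_add_sum_sq (fun k => (hX k).hasFDerivAt) i
  rw [pd, show flux hn ε u i = fun y => Xop n hn ε u i u y
      / √(1 + ∑ k, Xop n hn ε u k u y ^ 2) from rfl, hderiv.fderiv, sum_apply]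
  simp only [smul_apply, smul_eq_mul, ← Finset.sum_neg_distrib, ← mul_neg]
  refine Finset.sum_congr rfl fun j _ => ?_
  rw [← pd_last_Xop hn ε (hu.of_le (by norm_num)) (hu.of_le (by norm_num))]
  rfl

theorem pd_last_Lop (hu : ContDiff ℝ 3 u) (x : EuclideanSpace ℝ (Fin (2*n))) :
    pd (lastIdx hn) (Lop n hn ε u) x
      = -∑ i, XopStar n hn ε u i (pd (lastIdx hn) (flux hn ε u i)) x := by
  have hd : ∀ i ∈ Finset.univ, DifferentiableAt ℝ (Xop n hn ε u i (flux hn ε u i)) x :=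
    fun i _ => ((contDiff_Xop (k := 1) hn ε (hu.of_le (by norm_num))
      (contDiff_flux (k := 2) hn ε hu i) i).differentiable one_ne_zero).differentiableAt
  rw [show Lop n hn ε u = fun x => ∑ i, Xop n hn ε u i (flux hn ε u i) x from rfl, pd_sum hd,
    ← Finset.sum_neg_distrib]
  exact Finset.sum_congr rfl fun i _ =>
    pd_last_Xop hn ε (hu.of_le (by norm_num)) (contDiff_flux (k := 2) hn ε hu i) i x

end VectorFields

/-- If `u` is `C³`, has bounded intrinsic gradient, and solves `L_ε u = 0` in the
open set `Ω`, then `ω = ∂_{2n}u` satisfies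
`Σ_{i,j} (X^ε_{i,u})^*( (a_{ij}(∇^ε_u u)/√(1+|∇^ε_u u|²)) (X^ε_{j,u})^* ω ) = 0` in `Ω`. -/
theorem stmt8 {n : ℕ} (hn : 1 ≤ n) (ε : ℝ)
    (Ω : Set (EuclideanSpace ℝ (Fin (2*n)))) (hΩ : IsOpen Ω)
    (u : EuclideanSpace ℝ (Fin (2*n)) → ℝ) (hu : ContDiff ℝ 3 u)
    (hsol : ∀ x ∈ Ω, Lop n hn ε u x = 0) :
    ∀ x ∈ Ω,
      ∑ i : Fin (2*n), ∑ j : Fin (2*n),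
        XopStar n hn ε u i
          (fun y =>
            aCoef (fun k => Xop n hn ε u k u y) i j / Real.sqrt (1 + gradSq n hn ε u u y)
              * XopStar n hn ε u j (fun z => pd ⟨2*n - 1, by omega⟩ u z) y) x = 0 := by
  intro x hx
  have hcoef : ∀ i j, DifferentiableAt ℝ (fun y =>
      aCoef (fun k => Xop n hn ε u k u y) i j / √(1 + gradSq n hn ε u u y)
        * XopStar n hn ε u j (pd (lastIdx hn) u) y) x := fun i j =>
    ((contDiff_aCoef_div_sqrt_mul_XopStar (k := 1) hn ε (hu.of_le (by norm_num))
      (contDiff_pd (k := 2) hu) i j).differentiable one_ne_zero).differentiableAt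
  have hLop : pd (lastIdx hn) (Lop n hn ε u) x = 0 := by
    rw [pd_congr_nhds (Filter.eventually_of_mem (hΩ.mem_nhds hx) hsol), pd_const]
  calc _ = ∑ i, XopStar n hn ε u i (fun y => -pd (lastIdx hn) (flux hn ε u i) y) x := by
        refine Finset.sum_congr rfl fun i _ =>
          (XopStar_sum hn ε _ (fun j _ => hcoef i j) i).symm.trans ?_
        simp only [pd_last_flux hn ε hu, neg_neg]
    _ = pd (lastIdx hn) (Lop n hn ε u) x := by
        simp only [XopStar_neg, Finset.sum_neg_distrib, pd_last_Lop hn ε hu]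
    _ = 0 := hLop
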